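/- In the CEF/CD setting: if (x₀,y₀,u₀,v₀) ∈ P, {x_n},{u_n} are the iterated sequences of (T_A,H_A) from (x₀,u₀), and lim x_n = α, then there is no β ∈ A with β ≠ α such that lim_{n→∞} T_A(β, c_n) = β for some {c_n} ∈ IS_{f_A}^P(β, y₀, v₀). (Uniqueness of the weakly fixed point.) -/
import Mathlib


open Filter

/-- dist(A,B) = inf {ρ(a,b) : a ∈ A, b ∈ B} -/
noncomputable def setDist {X : Type*} [MetricSpace X] (A B : Set X) : ℝ :=
  sInf (Set.image2 dist A B)

/-- sup_{n≥k, m≥k} ρ(x n, y m) -/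
noncomputable def supDist {X : Type*} [MetricSpace X] (x y : ℕ → X) (k : ℕ) : ℝ :=
  sSup {d : ℝ | ∃ n m, k ≤ n ∧ k ≤ m ∧ d = dist (x n) (y m)}

/-- The property CD_X^P(f_A, f_B) of the pair (A,B). -/
def CDP {X C : Type*} [MetricSpace X] (A B : Set X) (P : Set (X × X × C × C))
    (fA fB : C → ℝ) : Prop :=
  ∀ (x y : ℕ → X) (u v : ℕ → C),
    (∀ n, x n ∈ A) → (∀ n, y n ∈ B) →
    Tendsto (supDist x y) atTop (nhds (setDist A B)) →
    (∀ n m, (x n, y m, u n, v m) ∈ P) →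
    Tendsto (fun n => fA (u n)) atTop (nhds (⨅ c, fA c)) →
    Tendsto (fun n => fB (v n)) atTop (nhds (⨅ c, fB c)) →
    ∃ a ∈ A, Tendsto x atTop (nhds a)

/-- The iterated sequences of (T,H) with initial guess p:
x_{n+1} = T(x_n, u_n), u_{n+1} = H(x_n, u_n). -/
def iterSeq {X C : Type*} (T : X → C → X) (H : X → C → C) (p : X × C) : ℕ → X × C
  | 0 => p
  | n + 1 => (T (iterSeq T H p n).1 (iterSeq T H p n).2,
              H (iterSeq T H p n).1 (iterSeq T H p n).2)

/-- (T_A,T_B,H_A,H_B,f_A,f_B) ∈ CEF_C^P(A,B): a contraction map set with an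
external factor about (A,B,C) in P. -/
def CEF {X C : Type*} [MetricSpace X] (A B : Set X) (P : Set (X × X × C × C))
    (TA TB : X → C → X) (HA HB : X → C → C) (fA fB : C → ℝ) : Prop :=
  -- C-1: P-invariance of the iterated sequences
  (∀ q ∈ P, ∀ n m : ℕ,
      ((iterSeq TA HA (q.1, q.2.2.1) n).1,
       (iterSeq TB HB (q.2.1, q.2.2.2) m).1,
       (iterSeq TA HA (q.1, q.2.2.1) n).2,
       (iterSeq TB HB (q.2.1, q.2.2.2) m).2) ∈ P) ∧
  -- C-2: the infima of f_A and f_B are finite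
  BddBelow (Set.range fA) ∧ BddBelow (Set.range fB) ∧
  -- C-3: the contraction condition
  (∃ lam : ℝ, 0 ≤ lam ∧ lam < 1 ∧ ∀ q ∈ P,
      dist (TA q.1 q.2.2.1) (TB q.2.1 q.2.2.2)
        + fA (HA q.1 q.2.2.1) + fB (HB q.2.1 q.2.2.2) ≤
      lam * (dist q.1 q.2.1 + fA q.2.2.1 + fB q.2.2.2)
        + (1 - lam) * (setDist A B + (⨅ c, fA c) + (⨅ c, fB c)))

/-- {c_n} ∈ IS_f^P(a, y, v): an infimum sequence of a on f and (y,v) in P. -/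
def ISseq {X C : Type*} (P : Set (X × X × C × C)) (f : C → ℝ)
    (a y : X) (v : C) (c : ℕ → C) : Prop :=
  Tendsto (fun n => f (c n)) atTop (nhds (⨅ d, f d)) ∧ ∀ n, (a, y, c n, v) ∈ P

/-- Interleaving two sequences with the same limit. -/
lemma interleave_tendsto {α : Type*} {L : Filter α} {f g : ℕ → α}
    (hf : Tendsto f atTop L) (hg : Tendsto g atTop L) :
    Tendsto (fun n => if n % 2 = 0 then f (n / 2) else g (n / 2)) atTop L := by
  rw [tendsto_def] at hf hg ⊢
  intro s hs
  obtain ⟨a, ha⟩ := mem_atTop_sets.mp (hf s hs)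
  obtain ⟨b, hb⟩ := mem_atTop_sets.mp (hg s hs)
  rw [mem_atTop_sets]
  refine ⟨2 * max a b, fun n hn => ?_⟩
  have hdiv : max a b ≤ n / 2 := by omega
  by_cases h : n % 2 = 0
  · simpa [Set.mem_preimage, h] using ha _ (le_trans (le_max_left a b) hdiv)
  · simpa [Set.mem_preimage, h] using hb _ (le_trans (le_max_right a b) hdiv)

theorem stmt_13 {X C : Type*} [MetricSpace X] [Nonempty C] (A B : Set X)
    (P : Set (X × X × C × C)) (TA TB : X → C → X) (HA HB : X → C → C) (fA fB : C → ℝ)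
    (hP : ∀ q ∈ P, q.1 ∈ A ∧ q.2.1 ∈ B)
    (hTA : ∀ x ∈ A, ∀ c, TA x c ∈ A) (hTB : ∀ y ∈ B, ∀ c, TB y c ∈ B)
    (hCD : CDP A B P fA fB)
    (hCEF : CEF A B P TA TB HA HB fA fB)
    (x₀ y₀ : X) (u₀ v₀ : C) (hq : (x₀, y₀, u₀, v₀) ∈ P)
    (x : ℕ → X) (u : ℕ → C)
    (hxu : ∀ n, (x n, u n) = iterSeq TA HA (x₀, u₀) n)
    (α : X) (hα : Tendsto x atTop (nhds α)) :
    ¬ ∃ β ∈ A, β ≠ α ∧ ∃ c : ℕ → C, ISseq P fA β y₀ v₀ c ∧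
      Tendsto (fun n => TA β (c n)) atTop (nhds β) := by
  rintro ⟨β, hβA, hβα, c, ⟨hcInf, hcP⟩, hβlim⟩
  obtain ⟨hC1, hbA, hbB, hlamEx⟩ := hCEF
  obtain ⟨lam, hlam0, hlam1, hcon⟩ := hlamEx
  set y : ℕ → X := fun m => (iterSeq TB HB (y₀, v₀) m).1 with hy
  set v : ℕ → C := fun m => (iterSeq TB HB (y₀, v₀) m).2 with hv
  have hyd : ∀ m, (iterSeq TB HB (y₀, v₀) m).1 = y m := fun _ => rfl
  have hvd : ∀ m, (iterSeq TB HB (y₀, v₀) m).2 = v m := fun _ => rfl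
  have hiter : ∀ n, iterSeq TA HA (x₀, u₀) n = (x n, u n) := fun n => (hxu n).symm
  have hxsucc : ∀ n, x (n + 1) = TA (x n) (u n) := by
    intro n
    have h := hiter (n + 1)
    rw [iterSeq, hiter n] at h
    exact (congrArg Prod.fst h).symm
  have husucc : ∀ n, u (n + 1) = HA (x n) (u n) := by
    intro n
    have h := hiter (n + 1)
    rw [iterSeq, hiter n] at h
    exact (congrArg Prod.snd h).symm
  have hysucc : ∀ m, y (m + 1) = TB (y m) (v m) := fun m => rfl
  have hvsucc : ∀ m, v (m + 1) = HB (y m) (v m) := fun m => rfl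
  -- P memberships
  have hPxy : ∀ n m, (x n, y m, u n, v m) ∈ P := by
    intro n m
    have h := hC1 _ hq n m
    simpa [hiter n, hyd, hvd] using h
  have hPβ : ∀ k m, (β, y m, c k, v m) ∈ P := by
    intro k m
    have h := hC1 _ (hcP k) 0 m
    simpa [iterSeq, hyd, hvd] using h
  have hxA : ∀ n, x n ∈ A := fun n => (hP _ (hPxy n 0)).1
  have hyB : ∀ m, y m ∈ B := fun m => (hP _ (hPxy 0 m)).2
  -- lower bounds
  have hD_le : ∀ a ∈ A, ∀ b ∈ B, setDist A B ≤ dist a b := by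
    intro a ha b hb
    refine csInf_le ⟨0, ?_⟩ (Set.mem_image2_of_mem ha hb)
    rintro d ⟨p, hp, q', hq', rfl⟩
    exact dist_nonneg
  have hiA_le : ∀ d, (⨅ d, fA d) ≤ fA d := fun d => ciInf_le hbA d
  have hiB_le : ∀ d, (⨅ d, fB d) ≤ fB d := fun d => ciInf_le hbB d
  -- specialized contraction inequalities
  have hconA : ∀ n m, dist (x (n+1)) (y (m+1)) + fA (u (n+1)) + fB (v (m+1)) ≤
      lam * (dist (x n) (y m) + fA (u n) + fB (v m))
        + (1 - lam) * (setDist A B + (⨅ d, fA d) + (⨅ d, fB d)) := by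
    intro n m
    rw [hxsucc n, husucc n, hysucc m, hvsucc m]
    exact hcon _ (hPxy n m)
  have hconβ : ∀ k m, dist (TA β (c k)) (y (m+1)) + fA (HA β (c k)) + fB (v (m+1)) ≤
      lam * (dist β (y m) + fA (c k) + fB (v m))
        + (1 - lam) * (setDist A B + (⨅ d, fA d) + (⨅ d, fB d)) := by
    intro k m
    rw [hysucc m, hvsucc m]
    exact hcon _ (hPβ k m)
  -- the quantity e
  set e : ℕ → ℕ → ℝ := fun n m => dist (x n) (y m) + fA (u n) + fB (v m)
      - (setDist A B + (⨅ d, fA d) + (⨅ d, fB d)) with he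
  have heq : ∀ n m, dist (x n) (y m) + fA (u n) + fB (v m)
      = e n m + (setDist A B + (⨅ d, fA d) + (⨅ d, fB d)) := by
    intro n m; simp only [he]; ring
  have hepos : ∀ n m, 0 ≤ e n m := by
    intro n m
    have h1 := hD_le _ (hxA n) _ (hyB m)
    have h2 := hiA_le (u n)
    have h3 := hiB_le (v m)
    linarith [heq n m]
  have hKey : ∀ n m, e (n+1) (m+1) ≤ lam * e n m := by
    intro n m
    have hmul : lam * (dist (x n) (y m) + fA (u n) + fB (v m))
        = lam * e n m + lam * (setDist A B + (⨅ d, fA d) + (⨅ d, fB d)) := by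
      linear_combination lam * heq n m
    linarith [hconA n m, heq (n+1) (m+1), hmul]
  have hgeo : ∀ j n m, e (n+j) (m+j) ≤ lam ^ j * e n m := by
    intro j
    induction j with
    | zero => intro n m; simp
    | succ j ih =>
      intro n m
      calc e (n+(j+1)) (m+(j+1)) = e ((n+j)+1) ((m+j)+1) := rfl
        _ ≤ lam * e (n+j) (m+j) := hKey _ _
        _ ≤ lam * (lam ^ j * e n m) := mul_le_mul_of_nonneg_left (ih n m) hlam0
        _ = lam ^ (j+1) * e n m := by ring
  have hediag : ∀ n, e n n ≤ lam ^ n * e 0 0 := by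
    intro n
    have := hgeo n 0 0
    simpa using this
  have he00 : 0 ≤ e 0 0 := hepos 0 0
  have hpow1 : ∀ n : ℕ, lam ^ n ≤ 1 := fun n => pow_le_one₀ hlam0 hlam1.le
  -- f_A(u n) → inf f_A, f_B(v m) → inf f_B
  have hpow0 : Tendsto (fun n : ℕ => lam ^ n) atTop (nhds 0) :=
    tendsto_pow_atTop_nhds_zero_of_lt_one hlam0 hlam1
  have heuB : ∀ n, fA (u n) ≤ (⨅ d, fA d) + e 0 0 * lam ^ n := by
    intro n
    have h1 := hediag n
    have h2 := hD_le _ (hxA n) _ (hyB n)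
    have h3 := hiB_le (v n)
    have h4 := heq n n
    nlinarith
  have hevB : ∀ n, fB (v n) ≤ (⨅ d, fB d) + e 0 0 * lam ^ n := by
    intro n
    have h1 := hediag n
    have h2 := hD_le _ (hxA n) _ (hyB n)
    have h3 := hiA_le (u n)
    have h4 := heq n n
    nlinarith
  have hufA : Tendsto (fun n => fA (u n)) atTop (nhds (⨅ d, fA d)) := by
    refine tendsto_of_tendsto_of_tendsto_of_le_of_le tendsto_const_nhds ?_
      (fun n => hiA_le (u n)) heuB
    simpa using (tendsto_const_nhds.add (hpow0.const_mul (e 0 0)))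
  have hvfB : Tendsto (fun n => fB (v n)) atTop (nhds (⨅ d, fB d)) := by
    refine tendsto_of_tendsto_of_tendsto_of_le_of_le tendsto_const_nhds ?_
      (fun n => hiB_le (v n)) hevB
    simpa using (tendsto_const_nhds.add (hpow0.const_mul (e 0 0)))
  -- the quantity g
  set g : ℕ → ℝ := fun m => dist β (y m) + fB (v m) - (setDist A B + (⨅ d, fB d)) with hg
  have hgqe : ∀ m, dist β (y m) + fB (v m) = g m + (setDist A B + (⨅ d, fB d)) := by
    intro m; simp only [hg]; ring
  have hgpos : ∀ m, 0 ≤ g m := by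
    intro m
    have h1 := hD_le _ hβA _ (hyB m)
    have h2 := hiB_le (v m)
    linarith [hgqe m]
  have hgKey : ∀ m, g (m+1) ≤ lam * g m := by
    intro m
    have hL : Tendsto (fun k => dist (TA β (c k)) (y (m+1)) + (⨅ d, fA d) + fB (v (m+1)))
        atTop (nhds (dist β (y (m+1)) + (⨅ d, fA d) + fB (v (m+1)))) :=
      ((hβlim.dist tendsto_const_nhds).add_const _).add_const _
    have hR : Tendsto (fun k => lam * (dist β (y m) + fA (c k) + fB (v m))
        + (1 - lam) * (setDist A B + (⨅ d, fA d) + (⨅ d, fB d)))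
        atTop (nhds (lam * (dist β (y m) + (⨅ d, fA d) + fB (v m))
        + (1 - lam) * (setDist A B + (⨅ d, fA d) + (⨅ d, fB d)))) := by
      exact (((tendsto_const_nhds.add hcInf).add_const (fB (v m))).const_mul lam).add_const _
    have hle : ∀ k, dist (TA β (c k)) (y (m+1)) + (⨅ d, fA d) + fB (v (m+1)) ≤
        lam * (dist β (y m) + fA (c k) + fB (v m))
        + (1 - lam) * (setDist A B + (⨅ d, fA d) + (⨅ d, fB d)) := by
      intro k
      have h := hconβ k m
      have h2 := hiA_le (HA β (c k))
      linarith
    have hfin := le_of_tendsto_of_tendsto' hL hR hle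
    have hmul2 : lam * (dist β (y m) + (⨅ d, fA d) + fB (v m))
        = lam * g m + lam * ((setDist A B + (⨅ d, fB d)) + (⨅ d, fA d)) := by
      linear_combination lam * hgqe m
    linarith [hfin, hgqe (m+1), hmul2]
  have hg_geo : ∀ m, g m ≤ lam ^ m * g 0 := by
    intro m
    induction m with
    | zero => simp
    | succ m ih =>
      calc g (m+1) ≤ lam * g m := hgKey m
        _ ≤ lam * (lam ^ m * g 0) := mul_le_mul_of_nonneg_left ih hlam0
        _ = lam ^ (m+1) * g 0 := by ring
  have hg0 : 0 ≤ g 0 := hgpos 0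
  -- distance estimates
  have hdistxy : ∀ n m, dist (x n) (y m) ≤ setDist A B + e n m := by
    intro n m
    have h2 := hiA_le (u n)
    have h3 := hiB_le (v m)
    linarith [heq n m]
  have hdistβy : ∀ m, dist β (y m) ≤ setDist A B + lam ^ m * g 0 := by
    intro m
    have h1 := hg_geo m
    have h2 := hiB_le (v m)
    linarith [hgqe m]
  have hβyfold : ∀ m, dist β (y m) + fB (v m) ≤ setDist A B + (⨅ d, fB d) + g 0 := by
    intro m
    have h1 := hg_geo m
    have h2 : lam ^ m * g 0 ≤ g 0 := mul_le_of_le_one_left hg0 (hpow1 m)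
    linarith [hgqe m]
  have hfAuB : ∀ n, fA (u n) ≤ (⨅ d, fA d) + e 0 0 := by
    intro n
    have := heuB n
    linarith [mul_le_of_le_one_right he00 (hpow1 n)]
  have hxyn : ∀ n, dist (x n) (y n) ≤ setDist A B + e 0 0 := by
    intro n
    have h1 := hdistxy n n
    have h2 := hediag n
    linarith [mul_le_of_le_one_left he00 (hpow1 n)]
  -- uniform bounds on boundary values of e
  set M₁ : ℝ := (setDist A B + e 0 0) + (setDist A B + g 0) + dist β (y 0)
      + ((⨅ d, fA d) + e 0 0) + fB (v 0)
      - (setDist A B + (⨅ d, fA d) + (⨅ d, fB d)) with hM₁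
  set M₂ : ℝ := dist (x 0) β + (setDist A B + (⨅ d, fB d) + g 0) + fA (u 0)
      - (setDist A B + (⨅ d, fA d) + (⨅ d, fB d)) with hM₂
  have hM1 : ∀ j, e j 0 ≤ M₁ := by
    intro j
    have htri : dist (x j) (y 0) ≤ dist (x j) (y j) + dist β (y j) + dist β (y 0) := by
      calc dist (x j) (y 0) ≤ dist (x j) (y j) + dist (y j) (y 0) := dist_triangle _ _ _
        _ ≤ dist (x j) (y j) + (dist (y j) β + dist β (y 0)) := by
            linarith [dist_triangle (y j) β (y 0)]
        _ = dist (x j) (y j) + dist β (y j) + dist β (y 0) := by rw [dist_comm (y j) β]; ring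
    have h1 := hxyn j
    have h2 : dist β (y j) ≤ setDist A B + g 0 := by
      have := hdistβy j
      nlinarith [hpow1 j, mul_le_of_le_one_right hg0 (hpow1 j)]
    have h3 := hfAuB j
    linarith [heq j 0, hM₁]
  have hM2 : ∀ j, e 0 j ≤ M₂ := by
    intro j
    have htri : dist (x 0) (y j) ≤ dist (x 0) β + dist β (y j) := dist_triangle _ _ _
    have h1 := hβyfold j
    linarith [heq 0 j, hM₂]
  set M : ℝ := max (max M₁ M₂) (g 0) with hM
  have hM0 : 0 ≤ M := le_trans hg0 (le_max_right _ _)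
  have hmain : ∀ n m, dist (x n) (y m) ≤ setDist A B + lam ^ (min n m) * M := by
    intro n m
    rcases le_total n m with h | h
    · rw [min_eq_left h]
      have h1 : e n m ≤ lam ^ n * e 0 (m - n) := by
        have := hgeo n 0 (m - n)
        simpa [Nat.sub_add_cancel h] using this
      have h2 : lam ^ n * e 0 (m - n) ≤ lam ^ n * M :=
        mul_le_mul_of_nonneg_left
          (le_trans (hM2 _) (le_trans (le_max_right M₁ M₂) (le_max_left _ _)))
          (pow_nonneg hlam0 n)
      have h3 := hdistxy n m
      linarith
    · rw [min_eq_right h]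
      have h1 : e n m ≤ lam ^ m * e (n - m) 0 := by
        have := hgeo m (n - m) 0
        simpa [Nat.sub_add_cancel h] using this
      have h2 : lam ^ m * e (n - m) 0 ≤ lam ^ m * M :=
        mul_le_mul_of_nonneg_left
          (le_trans (hM1 _) (le_trans (le_max_left M₁ M₂) (le_max_left _ _)))
          (pow_nonneg hlam0 m)
      have h3 := hdistxy n m
      linarith
  -- interleaved sequences
  set z : ℕ → X := fun n => if n % 2 = 0 then x (n / 2) else β with hz
  set w : ℕ → C := fun n => if n % 2 = 0 then u (n / 2) else c (n / 2) with hw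
  have hzA : ∀ n, z n ∈ A := by
    intro n
    simp only [hz]
    split
    · exact hxA _
    · exact hβA
  have hPz : ∀ n m, (z n, y m, w n, v m) ∈ P := by
    intro n m
    by_cases h : n % 2 = 0 <;> simp only [hz, hw, if_pos, if_neg, h, if_true, if_false]
    · exact hPxy _ m
    · exact hPβ _ m
  have hwfA : Tendsto (fun n => fA (w n)) atTop (nhds (⨅ d, fA d)) := by
    have h := interleave_tendsto hufA hcInf
    simpa [hw, apply_ite fA] using h
  -- the sup distance bound
  have hzy : ∀ k n m, k ≤ n → k ≤ m →
      dist (z n) (y m) ≤ setDist A B + lam ^ (k / 2) * M := by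
    intro k n m hn hm
    by_cases hpar : n % 2 = 0
    · simp only [hz, if_pos hpar]
      have h1 := hmain (n / 2) m
      have hk : k / 2 ≤ min (n / 2) m :=
        le_min (Nat.div_le_div_right hn) (le_trans (Nat.div_le_self k 2) hm)
      have h2 : lam ^ (min (n / 2) m) * M ≤ lam ^ (k / 2) * M :=
        mul_le_mul_of_nonneg_right (pow_le_pow_of_le_one hlam0 hlam1.le hk) hM0
      linarith
    · simp only [hz, if_neg hpar]
      have h1 := hdistβy m
      have h2 : lam ^ m * g 0 ≤ lam ^ (k / 2) * M := by
        have hp : lam ^ m ≤ lam ^ (k / 2) :=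
          pow_le_pow_of_le_one hlam0 hlam1.le (le_trans (Nat.div_le_self k 2) hm)
        have hgM : g 0 ≤ M := le_max_right _ _
        calc lam ^ m * g 0 ≤ lam ^ (k / 2) * g 0 := mul_le_mul_of_nonneg_right hp hg0
          _ ≤ lam ^ (k / 2) * M := mul_le_mul_of_nonneg_left hgM (pow_nonneg hlam0 _)
      exact le_trans h1 (by linarith [h2])
  have hsupub : ∀ k, supDist z y k ≤ setDist A B + lam ^ (k / 2) * M := by
    intro k
    rw [supDist]
    refine csSup_le ⟨dist (z k) (y k), ⟨k, k, le_rfl, le_rfl, rfl⟩⟩ ?_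
    rintro d ⟨n, m, hn, hm, rfl⟩
    exact hzy k n m hn hm
  have hsuplb : ∀ k, setDist A B ≤ supDist z y k := by
    intro k
    rw [supDist]
    have hbdd : BddAbove {d : ℝ | ∃ n m, k ≤ n ∧ k ≤ m ∧ d = dist (z n) (y m)} := by
      refine ⟨setDist A B + lam ^ (k / 2) * M, ?_⟩
      rintro d ⟨n, m, hn, hm, rfl⟩
      exact hzy k n m hn hm
    calc setDist A B ≤ dist (z k) (y k) := hD_le _ (hzA k) _ (hyB k)
      _ ≤ _ := le_csSup hbdd ⟨k, k, le_rfl, le_rfl, rfl⟩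
  have hdivtop : Tendsto (fun k : ℕ => k / 2) atTop atTop :=
    tendsto_atTop_atTop.mpr fun b => ⟨2 * b, fun n hn => by omega⟩
  have hupperT : Tendsto (fun k => setDist A B + lam ^ (k / 2) * M) atTop
      (nhds (setDist A B)) := by
    simpa using tendsto_const_nhds.add ((hpow0.comp hdivtop).mul_const M)
  have hsup : Tendsto (supDist z y) atTop (nhds (setDist A B)) :=
    tendsto_of_tendsto_of_tendsto_of_le_of_le tendsto_const_nhds hupperT hsuplb hsupub
  -- apply the CD property
  obtain ⟨a, haA, hza⟩ := hCD z y w v hzA hyB hsup hPz hwfA hvfB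
  have hodd : Tendsto (fun k => z (2 * k + 1)) atTop (nhds a) :=
    hza.comp (tendsto_atTop_atTop.mpr fun b => ⟨b, fun n hn => by omega⟩)
  have hoddconst : (fun k => z (2 * k + 1)) = fun _ => β := by
    funext k
    simp only [hz]
    rw [if_neg (by omega)]
  have hβa : β = a := by
    rw [hoddconst] at hodd
    exact tendsto_nhds_unique hodd tendsto_const_nhds |>.symm ▸ rfl
  have heven : Tendsto (fun k => z (2 * k)) atTop (nhds a) :=
    hza.comp (tendsto_atTop_atTop.mpr fun b => ⟨b, fun n hn => by omega⟩)
  have hevenx : (fun k => z (2 * k)) = x := by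
    funext k
    simp only [hz]
    rw [if_pos (by omega)]
    congr 1
    omega
  have hαa : α = a := by
    rw [hevenx] at heven
    exact tendsto_nhds_unique hα heven
  exact hβα (hβa.trans hαa.symm)
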